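/- The supremum of $\|f'\|_\infty$ over all differentiable $f : [0,\infty) \to \mathbb{R}$ with $|f| \le 1$ and $f'$ Lipschitz of constant $1$, equals $2$. (Landau's inequality on the half-line.) -/

import Mathlib

/-!
Taylor's formula with Lipschitz remainder on `[x, x + 2]` gives
`|f (x + 2) - f x - 2 f' x| ≤ 2`, hence `2 |f' x| ≤ |f (x + 2)| + |f x| + 2 ≤ 4`.
The bound is attained at `0` by `f t = 1 - max (2 - t) 0 ^ 2 / 2`, which rises from `-1` to `1`
on `[0, 2]` with `f'' = -1` and is constant afterwards.
-/

open Set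
open scoped NNReal

def InL2HalfLine (f f' : ℝ → ℝ) : Prop :=
  (∀ t ∈ Ici (0:ℝ), HasDerivWithinAt f (f' t) (Ici 0) t) ∧
  (∀ t ∈ Ici (0:ℝ), |f t| ≤ 1) ∧
  LipschitzOnWith 1 f' (Ici 0)

theorem norm_sub_sub_smul_le_of_lipschitzOnWith {E : Type*} [NormedAddCommGroup E]
    [NormedSpace ℝ E] {f f' : ℝ → E} {K : ℝ≥0} {a b : ℝ}
    (hf : ∀ t ∈ Icc a b, HasDerivWithinAt f (f' t) (Icc a b) t)
    (hf' : LipschitzOnWith K f' (Icc a b)) (hab : a ≤ b) :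
    ‖f b - f a - (b - a) • f' a‖ ≤ K * (b - a) ^ 2 / 2 := by
  refine image_norm_le_of_norm_deriv_right_le_deriv_boundary
    (f := fun t => f t - f a - (t - a) • f' a) (f' := fun t => f' t - f' a)
    (B := fun t => K * (t - a) ^ 2 / 2) (B' := fun t => K * (t - a))
    ?cont ?deriv (by simp) ?derivB ?bound (right_mem_Icc.2 hab)
  case cont =>
    intro t ht
    exact ((hf t ht).continuousWithinAt.sub continuousWithinAt_const).sub
      ((continuousWithinAt_id.sub continuousWithinAt_const).smul continuousWithinAt_const)
  case deriv =>
    intro t ht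
    have hft := (hf t (Ico_subset_Icc_self ht)).mono_of_mem_nhdsWithin (Icc_mem_nhdsGE_of_mem ht)
    have hlin : HasDerivAt (fun s => (s - a) • f' a) (f' a) t := by
      simpa using ((hasDerivAt_id' t).sub_const a).smul_const (f' a)
    exact (hft.sub_const (f a)).sub hlin.hasDerivWithinAt
  case derivB =>
    intro t
    exact ((((hasDerivAt_id' t).sub_const a).pow 2).const_mul (K : ℝ) |>.div_const 2).congr_deriv
      (by ring)
  case bound =>
    intro t ht
    have h := hf'.norm_sub_le (Ico_subset_Icc_self ht) (left_mem_Icc.2 hab)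
    rwa [Real.norm_of_nonneg (sub_nonneg.2 ht.1)] at h

theorem InL2HalfLine.abs_deriv_le_two {f f' : ℝ → ℝ} (hf : InL2HalfLine f f') {x : ℝ}
    (hx : 0 ≤ x) : |f' x| ≤ 2 := by
  obtain ⟨hderiv, hbound, hlip⟩ := hf
  have hsub : Icc x (x + 2) ⊆ Ici 0 := fun t ht => hx.trans ht.1
  have htaylor : |f (x + 2) - f x - 2 * f' x| ≤ 2 := by
    convert norm_sub_sub_smul_le_of_lipschitzOnWith
      (fun t ht => (hderiv t (hsub ht)).mono hsub) (hlip.mono hsub) (by linarith) using 1 <;>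
      norm_num
  have hfx := abs_le.1 (hbound x hx)
  have hfx2 := abs_le.1 (hbound (x + 2) (hsub (right_mem_Icc.2 (by linarith))))
  rw [abs_le] at htaylor ⊢
  constructor <;> linarith [htaylor.1, htaylor.2]

theorem hasDerivAt_max_zero_sq (x : ℝ) :
    HasDerivAt (fun y : ℝ => max y 0 ^ 2) (2 * max x 0) x := by
  refine hasDerivAt_of_hasDerivAt_of_ne' (x := 0) (g := fun y => 2 * max y 0) (fun y hy => ?_)
    (by fun_prop) (by fun_prop) x
  rcases hy.lt_or_gt with hneg | hpos
  · refine (hasDerivAt_const y 0).congr_of_eventuallyEq ?_ |>.congr_deriv (by simp [hneg.le])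
    filter_upwards [eventually_lt_nhds hneg] with z hz
    simp [hz.le]
  · refine (hasDerivAt_pow 2 y).congr_of_eventuallyEq ?_ |>.congr_deriv (by simp [hpos.le])
    filter_upwards [eventually_gt_nhds hpos] with z hz
    simp [hz.le]

theorem inL2HalfLine_one_sub_max_two_sub_sq :
    InL2HalfLine (fun t => 1 - max (2 - t) 0 ^ 2 / 2) (fun t => max (2 - t) 0) := by
  refine ⟨fun t _ => ?_, fun t ht => ?_, ?_⟩
  · exact ((((hasDerivAt_max_zero_sq (2 - t)).comp_const_sub 2 t).div_const 2).const_sub 1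
      |>.congr_deriv (by ring)).hasDerivWithinAt
  · have hle : max (2 - t) 0 ≤ 2 := max_le (by linarith [mem_Ici.1 ht]) zero_le_two
    rw [abs_le]
    constructor <;> nlinarith [le_max_right (2 - t) 0]
  · refine LipschitzWith.lipschitzOnWith (LipschitzWith.of_dist_le_mul fun s t => ?_)
    simpa [Real.dist_eq, abs_sub_comm] using abs_max_sub_max_le_abs (2 - s) (2 - t) 0

/-- **Landau's inequality on the half-line.** The supremum of `‖f'‖_∞` over
all `f` on `[0,∞)` with `|f| ≤ 1` and `f'` Lipschitz of constant `1` equals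
`2` (and it is attained). -/
theorem landau_halfline :
    IsGreatest {y : ℝ | ∃ f f' : ℝ → ℝ, InL2HalfLine f f' ∧
        ∃ x ∈ Ici (0:ℝ), y = |f' x|} 2 := by
  refine ⟨⟨_, _, inL2HalfLine_one_sub_max_two_sub_sq, 0, self_mem_Ici, by norm_num⟩, ?_⟩
  rintro y ⟨f, f', hf, x, hx, rfl⟩
  exact hf.abs_deriv_le_two hx
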